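/- arXiv:2110.10936 — 2 statements merged into one kernel-verified Lean document; each statement's English description precedes it below -/
import Mathlib

section
/- (Catastrophic market failure under destructive competition.) Suppose that for each K ≥ 1 the idiosyncratic intensity of every bank i = 1, …, K is α_i(t, K) = ln(K) + b(t), so that A_i(t, K) = t ln(K) + B(t) with B(t) = ∫_0^t b(s) ds. Then for every ε ∈ (0, 1), with τ_(K) = max(τ_1, …, τ_K) defined from the K-bank model, lim_{K → ∞} P(τ_(K) ≤ ε) = 1 − e^{−A_0(ε)} = P(η_0 ≤ ε). -/
/-!
Both the systemic clock `η₀` and the idiosyncratic clocks are first passage times of continuous,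
nondecreasing, unbounded cumulative hazards, so `τ_i ≤ ε` holds exactly when `Z₀ ≤ A₀(ε)` or
`Z_i ≤ ε ln K + B(ε)`. By independence,
`P(τ_(K) ≤ ε) = (1 - e^{-A₀(ε)}) + e^{-A₀(ε)} (1 - K^{-ε} e^{-B(ε)})^K`, and the last power tends
to `0` because `(1 - p)^K ≤ exp (-K p)` and `K · K^{-ε} → ∞` for `ε < 1`.
-/

open MeasureTheory ProbabilityTheory

/-- The cumulative hazard `A(t) = ∫_0^t α(s) ds`. -/
noncomputable def cumHaz (α : ℝ → ℝ) (t : ℝ) : ℝ := ∫ s in (0:ℝ)..t, α s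

/-- The first time `s ≥ 0` at which the cumulative hazard reaches level `z`,
i.e. `inf {s ≥ 0 : A(s) ≥ z}`. -/
noncomputable def hitTime (α : ℝ → ℝ) (z : ℝ) : ℝ :=
  sInf {s : ℝ | 0 ≤ s ∧ z ≤ cumHaz α s}

open Filter Set Topology

section CumulativeHazard

variable {g : ℝ → ℝ}

theorem ContinuousOn.intervalIntegrable_of_Ici (hg : ContinuousOn g (Ici 0)) {x y : ℝ}
    (hx : 0 ≤ x) (hy : 0 ≤ y) : IntervalIntegrable g volume x y :=
  (hg.mono fun _ hs => le_trans (le_min hx hy) hs.1).intervalIntegrable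

theorem continuousOn_cumHaz (hg : ContinuousOn g (Ici 0)) : ContinuousOn (cumHaz g) (Ici 0) := by
  intro x (hx : 0 ≤ x)
  have hIcc : uIcc 0 (x + 1) = Icc 0 (x + 1) := uIcc_of_le (by linarith)
  have hprim : ContinuousOn (cumHaz g) (Icc 0 (x + 1)) := by
    rw [← hIcc]
    exact intervalIntegral.continuousOn_primitive_interval'
      (hg.intervalIntegrable_of_Ici le_rfl (by linarith)) left_mem_uIcc
  have hnhds : Icc 0 (x + 1) ∈ 𝓝[Ici 0] x := by
    rw [← Ici_inter_Iic]
    exact inter_mem_nhdsWithin _ (Iic_mem_nhds (by linarith))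
  exact (hprim x ⟨hx, by linarith⟩).mono_of_mem_nhdsWithin hnhds

variable (hg : ContinuousOn g (Ici 0)) (hg0 : ∀ t, 0 ≤ t → 0 ≤ g t)
include hg hg0

theorem monotoneOn_cumHaz : MonotoneOn (cumHaz g) (Ici 0) := by
  intro x (hx : 0 ≤ x) y (hy : 0 ≤ y) hxy
  have hdiff : cumHaz g y - cumHaz g x = ∫ s in x..y, g s :=
    intervalIntegral.integral_interval_sub_left (hg.intervalIntegrable_of_Ici le_rfl hy)
      (hg.intervalIntegrable_of_Ici le_rfl hx)
  have hnonneg : 0 ≤ ∫ s in x..y, g s :=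
    intervalIntegral.integral_nonneg hxy fun s hs => hg0 s (hx.trans hs.1)
  linarith

theorem cumHaz_nonneg {t : ℝ} (ht : 0 ≤ t) : 0 ≤ cumHaz g t := by
  simpa [cumHaz] using monotoneOn_cumHaz hg hg0 (le_refl (0:ℝ)) ht ht

end CumulativeHazard

/-- `hitTime α = firstPassage (cumHaz α)` definitionally. -/
noncomputable def firstPassage (f : ℝ → ℝ) (z : ℝ) : ℝ := sInf {s : ℝ | 0 ≤ s ∧ z ≤ f s}

theorem firstPassage_le_iff {f : ℝ → ℝ} (hmono : MonotoneOn f (Ici 0))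
    (hcont : ContinuousOn f (Ici 0)) (htop : Tendsto f atTop atTop) (z : ℝ) {t : ℝ}
    (ht : 0 ≤ t) : firstPassage f z ≤ t ↔ z ≤ f t := by
  have hbdd : BddBelow {s : ℝ | 0 ≤ s ∧ z ≤ f s} := ⟨0, fun _ hs => hs.1⟩
  refine ⟨fun h => ?_, fun h => csInf_le hbdd ⟨ht, h⟩⟩
  have hne : {s : ℝ | 0 ≤ s ∧ z ≤ f s}.Nonempty := by
    obtain ⟨s, hs, hs0⟩ := ((htop.eventually_ge_atTop z).and (eventually_ge_atTop 0)).exists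
    exact ⟨s, hs0, hs⟩
  have hclosed : IsClosed {s : ℝ | 0 ≤ s ∧ z ≤ f s} :=
    hcont.preimage_isClosed_of_isClosed isClosed_Ici isClosed_Ici
  obtain ⟨hs0, hs⟩ := hclosed.csInf_mem hne hbdd
  exact hs.trans (hmono hs0 ht h)

section CumHazFirstPassage

variable {g : ℝ → ℝ} (hg : ContinuousOn g (Ici 0)) (hg0 : ∀ t, 0 ≤ t → 0 ≤ g t)
include hg hg0

theorem hitTime_le_iff (htop : Tendsto (cumHaz g) atTop atTop) (z : ℝ) {t : ℝ} (ht : 0 ≤ t) :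
    hitTime g z ≤ t ↔ z ≤ cumHaz g t :=
  firstPassage_le_iff (monotoneOn_cumHaz hg hg0) (continuousOn_cumHaz hg) htop z ht

theorem firstPassage_mul_add_cumHaz_le_iff {c : ℝ} (hc : 0 < c) (z : ℝ) {t : ℝ} (ht : 0 ≤ t) :
    firstPassage (fun s => s * c + cumHaz g s) z ≤ t ↔ z ≤ t * c + cumHaz g t := by
  refine firstPassage_le_iff (fun x hx y hy hxy => ?_) ?_ ?_ z ht
  · exact add_le_add (mul_le_mul_of_nonneg_right hxy hc.le) (monotoneOn_cumHaz hg hg0 hx hy hxy)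
  · exact (continuous_id.mul continuous_const).continuousOn.add (continuousOn_cumHaz hg)
  · refine tendsto_atTop_mono' _ ?_ (tendsto_id.atTop_mul_const hc)
    filter_upwards [eventually_ge_atTop 0] with s hs
    exact le_add_of_nonneg_right (cumHaz_nonneg hg hg0 hs)

end CumHazFirstPassage

theorem tendsto_one_sub_pow_of_tendsto_mul_atTop {p : ℕ → ℝ} (hp : ∀ n, p n ≤ 1)
    (h : Tendsto (fun n : ℕ => n * p n) atTop atTop) :
    Tendsto (fun n => (1 - p n) ^ n) atTop (𝓝 0) := by
  refine squeeze_zero (fun n => pow_nonneg (by linarith [hp n]) n) (fun n => ?_)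
    (Real.tendsto_exp_atBot.comp (tendsto_neg_atTop_atBot.comp h))
  calc (1 - p n) ^ n ≤ Real.exp (-p n) ^ n :=
        pow_le_pow_left₀ (by linarith [hp n]) (by linarith [Real.add_one_le_exp (-p n)]) n
    _ = Real.exp (-(n * p n)) := by rw [← Real.exp_nat_mul, mul_neg]

theorem tendsto_natCast_mul_exp_neg_mul_log_add_atTop {ε : ℝ} (hε : ε < 1) (B : ℝ) :
    Tendsto (fun K : ℕ => (K : ℝ) * Real.exp (-(ε * Real.log K + B))) atTop atTop := by
  have hlog : Tendsto (fun K : ℕ => (1 - ε) * Real.log K + -B) atTop atTop :=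
    tendsto_atTop_add_const_right _ _ ((Real.tendsto_log_atTop.comp
      tendsto_natCast_atTop_atTop).const_mul_atTop (by linarith))
  refine (Real.tendsto_exp_atTop.comp hlog).congr' ?_
  filter_upwards [eventually_gt_atTop 0] with K hK
  rw [Function.comp_apply, ← Real.exp_log (Nat.cast_pos.2 hK : (0 : ℝ) < K), ← Real.exp_add,
    Real.log_exp]
  ring_nf

section IndependentClocks

variable {Ω ι β : Type*} [MeasurableSpace Ω] [MeasurableSpace β] [DecidableEq ι] {P : Measure Ω}
  {Z : ι → Ω → β} {j : ι} {s : Finset ι} {S T : Set β}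

theorem ProbabilityTheory.iIndepFun.measure_preimage_inter_biInter_preimage
    (hZ : iIndepFun Z P) (hj : j ∉ s) (hS : MeasurableSet S) (hT : MeasurableSet T) :
    P (Z j ⁻¹' S ∩ ⋂ i ∈ s, Z i ⁻¹' T) = P (Z j ⁻¹' S) * ∏ i ∈ s, P (Z i ⁻¹' T) := by
  have hsets : ∀ i ∈ insert j s, MeasurableSet (Function.update (fun _ => T) j S i) := by
    intro i _
    by_cases hi : i = j <;> simp [hi, hS, hT]
  have hT : ∀ i ∈ s, Function.update (fun _ => T) j S i = T :=
    fun i hi => Function.update_of_ne (ne_of_mem_of_not_mem hi hj) _ _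
  have h := hZ.measure_inter_preimage_eq_mul (insert j s) hsets
  rwa [Finset.set_biInter_insert, Finset.prod_insert hj, Function.update_self,
    Finset.prod_congr rfl fun i hi => by rw [hT i hi],
    Set.iInter₂_congr fun i hi => by rw [hT i hi]] at h

theorem ProbabilityTheory.iIndepFun.measure_preimage_union_biInter_preimage (hZ : iIndepFun Z P)
    (hZj : Measurable (Z j)) (hj : j ∉ s) (hS : MeasurableSet S) (hT : MeasurableSet T) :
    P (Z j ⁻¹' S ∪ ⋂ i ∈ s, Z i ⁻¹' T) =
      P (Z j ⁻¹' S) + P (Z j ⁻¹' Sᶜ) * ∏ i ∈ s, P (Z i ⁻¹' T) := by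
  rw [← union_sdiff_self, measure_union' disjoint_sdiff_right (hZj hS), sdiff_eq_compl_inter,
    ← preimage_compl, hZ.measure_preimage_inter_biInter_preimage hj hS.compl hT]

end IndependentClocks

section ExponentialClocks

variable {Ω : Type*} [MeasurableSpace Ω] {P : Measure Ω} [IsProbabilityMeasure P]

theorem measure_le_eq_one_sub_exp {Z : Ω → ℝ} (hZ : Measurable Z)
    (hexp : ∀ t : ℝ, 0 ≤ t → P {ω | t < Z ω} = ENNReal.ofReal (Real.exp (-t)))
    {c : ℝ} (hc : 0 ≤ c) : P {ω | Z ω ≤ c} = ENNReal.ofReal (1 - Real.exp (-c)) := by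
  have hcompl : {ω | Z ω ≤ c} = {ω | c < Z ω}ᶜ := by ext ω; simp
  rw [hcompl, prob_compl_eq_one_sub (measurableSet_lt measurable_const hZ), hexp c hc,
    ← ENNReal.ofReal_one, ← ENNReal.ofReal_sub _ (Real.exp_nonneg _)]

theorem ProbabilityTheory.iIndepFun.measure_le_or_forall_Icc_le {Z : ℕ → Ω → ℝ}
    (hind : iIndepFun Z P) (hZ : ∀ i, Measurable (Z i))
    (hexp : ∀ i, ∀ t : ℝ, 0 ≤ t → P {ω | t < Z i ω} = ENNReal.ofReal (Real.exp (-t)))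
    {a c : ℝ} (ha : 0 ≤ a) (hc : 0 ≤ c) (K : ℕ) :
    P (Z 0 ⁻¹' Iic a ∪ ⋂ i ∈ Finset.Icc 1 K, Z i ⁻¹' Iic c) =
      ENNReal.ofReal (1 - Real.exp (-a)) +
        ENNReal.ofReal (Real.exp (-a)) * ENNReal.ofReal ((1 - Real.exp (-c)) ^ K) := by
  rw [hind.measure_preimage_union_biInter_preimage (hZ 0) (by simp) measurableSet_Iic
    measurableSet_Iic, compl_Iic]
  have hfac : ∀ i ∈ Finset.Icc 1 K, P (Z i ⁻¹' Iic c) = ENNReal.ofReal (1 - Real.exp (-c)) :=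
    fun i _ => measure_le_eq_one_sub_exp (hZ i) (hexp i) hc
  have hq : 0 ≤ 1 - Real.exp (-c) := sub_nonneg.2 (Real.exp_le_one_iff.2 (neg_nonpos.2 hc))
  rw [Finset.prod_congr rfl hfac, Finset.prod_const, Nat.card_Icc, Nat.add_sub_cancel,
    ← ENNReal.ofReal_pow hq]
  exact congr_arg₂ _ (measure_le_eq_one_sub_exp (hZ 0) (hexp 0) ha)
    (congr_arg₂ _ (hexp 0 a ha) rfl)

end ExponentialClocks

/-- (Catastrophic market failure under destructive competition.)
In the `K`-bank model, every bank `i = 1, …, K` has idiosyncratic cumulative hazard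
`A_i(s, K) = s · ln K + B(s)` with `B(s) = ∫_0^s b(u) du`, so
`η_i^{(K)} = inf {s ≥ 0 : s ln K + B(s) ≥ Z_i}` and `τ_i^{(K)} = min (η_0, η_i^{(K)})`.
Then for every `ε ∈ (0, 1)`, with `τ_(K) = max (τ_1^{(K)}, …, τ_K^{(K)})`,
`lim_{K → ∞} P(τ_(K) ≤ ε) = 1 − e^{−A_0(ε)} = P(η_0 ≤ ε)`. -/
theorem catastrophic_market_failure_destructive_competition
    {Ω : Type*} [MeasurableSpace Ω] (P : Measure Ω) [IsProbabilityMeasure P]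
    (Z : ℕ → Ω → ℝ) (α₀ b : ℝ → ℝ)
    (hZmeas : ∀ i, Measurable (Z i))
    (hZindep : iIndepFun Z P)
    (hZexp : ∀ i, ∀ t : ℝ, 0 ≤ t → P {ω | t < Z i ω} = ENNReal.ofReal (Real.exp (-t)))
    (hα₀pos : ∀ t, 0 ≤ t → 0 < α₀ t) (hbnonneg : ∀ t, 0 ≤ t → 0 ≤ b t)
    (hα₀cont : ContinuousOn α₀ (Set.Ici 0)) (hbcont : ContinuousOn b (Set.Ici 0))
    (hA₀inf : Filter.Tendsto (cumHaz α₀) Filter.atTop Filter.atTop)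
    (ε : ℝ) (hε : 0 < ε) (hε1 : ε < 1) :
    Filter.Tendsto
      (fun K : ℕ => P {ω | ∀ i : ℕ, 1 ≤ i → i ≤ K →
          min (hitTime α₀ (Z 0 ω))
            (sInf {s : ℝ | 0 ≤ s ∧ Z i ω ≤ s * Real.log K + cumHaz b s}) ≤ ε})
      Filter.atTop (nhds (ENNReal.ofReal (1 - Real.exp (-cumHaz α₀ ε))))
    ∧ ENNReal.ofReal (1 - Real.exp (-cumHaz α₀ ε)) = P {ω | hitTime α₀ (Z 0 ω) ≤ ε} := by
  have hα₀nonneg : ∀ t, 0 ≤ t → 0 ≤ α₀ t := fun t ht => (hα₀pos t ht).le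
  set a := cumHaz α₀ ε
  set c : ℕ → ℝ := fun K => ε * Real.log K + cumHaz b ε
  have ha : 0 ≤ a := cumHaz_nonneg hα₀cont hα₀nonneg hε.le
  have hc : ∀ K, 0 ≤ c K := fun K => add_nonneg (mul_nonneg hε.le (Real.log_natCast_nonneg K))
    (cumHaz_nonneg hbcont hbnonneg hε.le)
  have hhit : ∀ z, hitTime α₀ z ≤ ε ↔ z ≤ a :=
    fun z => hitTime_le_iff hα₀cont hα₀nonneg hA₀inf z hε.le
  have hevent : ∀ K : ℕ, 2 ≤ K → {ω | ∀ i : ℕ, 1 ≤ i → i ≤ K →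
      min (hitTime α₀ (Z 0 ω)) (sInf {s : ℝ | 0 ≤ s ∧ Z i ω ≤ s * Real.log K + cumHaz b s}) ≤ ε}
      = Z 0 ⁻¹' Iic a ∪ ⋂ i ∈ Finset.Icc 1 K, Z i ⁻¹' Iic (c K) := by
    intro K hK
    have hbank : ∀ z, sInf {s : ℝ | 0 ≤ s ∧ z ≤ s * Real.log K + cumHaz b s} ≤ ε ↔ z ≤ c K :=
      fun z => firstPassage_mul_add_cumHaz_le_iff hbcont hbnonneg
        (Real.log_pos (by exact_mod_cast hK)) z hε.le
    ext ω
    by_cases h0 : Z 0 ω ≤ a <;> simp [h0, hhit, hbank]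
  have hpow : Tendsto (fun K : ℕ => (1 - Real.exp (-c K)) ^ K) atTop (𝓝 0) :=
    tendsto_one_sub_pow_of_tendsto_mul_atTop
      (fun K => Real.exp_le_one_iff.2 (neg_nonpos.2 (hc K)))
      (tendsto_natCast_mul_exp_neg_mul_log_add_atTop hε1 _)
  have hlim : Tendsto (fun K : ℕ => ENNReal.ofReal (1 - Real.exp (-a)) +
      ENNReal.ofReal (Real.exp (-a)) * ENNReal.ofReal ((1 - Real.exp (-c K)) ^ K)) atTop
      (𝓝 (ENNReal.ofReal (1 - Real.exp (-a)))) := by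
    simpa using (ENNReal.Tendsto.const_mul (ENNReal.tendsto_ofReal hpow)
      (Or.inr ENNReal.ofReal_ne_top)).const_add (ENNReal.ofReal (1 - Real.exp (-a)))
  refine ⟨hlim.congr' ?_, ?_⟩
  · filter_upwards [eventually_ge_atTop 2] with K hK
    rw [hevent K hK, hZindep.measure_le_or_forall_Icc_le hZmeas hZexp ha (hc K)]
  · rw [← measure_le_eq_one_sub_exp (hZmeas 0) (hZexp 0) ha]
    exact congr_arg P (Set.ext fun ω => (hhit _).symm)
end

section
/- (Pairwise lower bound on the market failure probability.) For every ε > 0, P(|τ_i − τ_j| < ε for some pair (i,j) with 1 ≤ i, j ≤ K, i ≠ j) ≥ 1 − min_{i ≠ j} [ ∫_0^∞ α_i(x) exp(−A_i(x) − A_j(x+ε) − A_0(x+ε)) dx + ∫_0^∞ α_j(x) exp(−A_j(x) − A_i(x+ε) − A_0(x+ε)) dx ], where the minimum is over all pairs of distinct indices i, j ∈ {1, …, K}. -/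
/-
Fix the pair `(i, j)` attaining the minimum. If `|τ_i - τ_j| ≥ ε`, where `τ_k = min η_0 η_k`, then
one of the two, say `i`, satisfies `η_i + ε ≤ η_j` and `η_i + ε ≤ η_0`. Given `η_i = x`, by
independence this has probability `P(x + ε ≤ η_j) P(x + ε ≤ η_0) = exp (-A_j(x + ε) - A_0(x + ε))`,
because `t ≤ η_k ↔ A_k(t) ≤ Z_k` for `t > 0`. Finally `η_i = A_i⁻¹(Z_i)` has density
`α_i e^{-A_i}` on `(0, ∞)` (substitute `z = A_i(x)` in the exponential density), so the two cases
contribute the two integrals.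
-/

open MeasureTheory ProbabilityTheory

open Set Filter Topology
open scoped ENNReal

section HazardFunction

variable {α : ℝ → ℝ}

lemma intervalIntegrable_of_continuousOn_Ici (hcont : ContinuousOn α (Ici 0)) {a b : ℝ}
    (ha : 0 ≤ a) (hb : 0 ≤ b) : IntervalIntegrable α volume a b :=
  (hcont.mono fun _ hx ↦ (le_min ha hb).trans hx.1).intervalIntegrable

@[simp]
lemma cumHaz_zero : cumHaz α 0 = 0 := intervalIntegral.integral_same

lemma cumHaz_strictMonoOn (hpos : ∀ t, 0 ≤ t → 0 < α t) (hcont : ContinuousOn α (Ici 0)) :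
    StrictMonoOn (cumHaz α) (Ici 0) := by
  intro a ha b hb hab
  have hadd : cumHaz α a + ∫ s in a..b, α s = cumHaz α b :=
    intervalIntegral.integral_add_adjacent_intervals
      (intervalIntegrable_of_continuousOn_Ici hcont le_rfl ha)
      (intervalIntegrable_of_continuousOn_Ici hcont ha hb)
  have hpos' : 0 < ∫ s in a..b, α s :=
    intervalIntegral.intervalIntegral_pos_of_pos_on
      (intervalIntegrable_of_continuousOn_Ici hcont ha hb)
      (fun x hx ↦ hpos x (le_trans ha hx.1.le)) hab
  linarith

lemma cumHaz_pos (hpos : ∀ t, 0 ≤ t → 0 < α t) (hcont : ContinuousOn α (Ici 0)) {t : ℝ}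
    (ht : 0 < t) : 0 < cumHaz α t := by
  simpa using cumHaz_strictMonoOn hpos hcont self_mem_Ici ht.le ht

lemma cumHaz_hasDerivAt (hcont : ContinuousOn α (Ici 0)) {x : ℝ} (hx : 0 < x) :
    HasDerivAt (cumHaz α) (α x) x :=
  intervalIntegral.integral_hasDerivAt_right
    (intervalIntegrable_of_continuousOn_Ici hcont le_rfl hx.le)
    ((hcont.mono Ioi_subset_Ici_self).stronglyMeasurableAtFilter isOpen_Ioi x hx)
    (hcont.continuousAt (Ici_mem_nhds hx))

lemma cumHaz_continuousOn (hcont : ContinuousOn α (Ici 0)) : ContinuousOn (cumHaz α) (Ici 0) := by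
  intro t ht
  have ht' : 0 ≤ t + 1 := by linarith [mem_Ici.mp ht]
  have hco := intervalIntegral.continuousOn_primitive_interval'
    (intervalIntegrable_of_continuousOn_Ici hcont le_rfl ht') left_mem_uIcc
  rw [uIcc_of_le ht'] at hco
  exact (hco t ⟨ht, by linarith⟩).mono_of_mem_nhdsWithin <| mem_nhdsWithin.mpr
    ⟨Iio (t + 1), isOpen_Iio, lt_add_one t, fun x hx ↦ ⟨hx.2, hx.1.le⟩⟩

lemma exists_cumHaz_eq (hcont : ContinuousOn α (Ici 0))
    (hAinf : Tendsto (cumHaz α) atTop atTop) {z : ℝ} (hz : 0 ≤ z) :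
    ∃ x, 0 ≤ x ∧ cumHaz α x = z := by
  obtain ⟨b, hb⟩ := (hAinf.eventually_ge_atTop z).exists_forall_of_atTop
  have hb0 : 0 ≤ max b 0 := le_max_right _ _
  obtain ⟨x, hx, hxz⟩ :=
    intermediate_value_Icc hb0 ((cumHaz_continuousOn hcont).mono Icc_subset_Ici_self)
      ⟨by simpa using hz, hb _ (le_max_left _ _)⟩
  exact ⟨x, hx.1, hxz⟩

lemma cumHaz_image_Ioi (hpos : ∀ t, 0 ≤ t → 0 < α t) (hcont : ContinuousOn α (Ici 0))
    (hAinf : Tendsto (cumHaz α) atTop atTop) : cumHaz α '' Ioi 0 = Ioi 0 := by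
  refine (image_subset_iff.mpr fun x hx ↦ cumHaz_pos hpos hcont hx).antisymm fun z hz ↦ ?_
  obtain ⟨x, hx, rfl⟩ := exists_cumHaz_eq hcont hAinf (le_of_lt hz)
  refine ⟨x, hx.lt_of_ne ?_, rfl⟩
  rintro rfl
  exact (mem_Ioi.mp hz).ne' cumHaz_zero

lemma hitTime_cumHaz (hpos : ∀ t, 0 ≤ t → 0 < α t) (hcont : ContinuousOn α (Ici 0)) {x : ℝ}
    (hx : 0 ≤ x) : hitTime α (cumHaz α x) = x :=
  IsLeast.csInf_eq ⟨⟨hx, le_rfl⟩, fun _ hs ↦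
    ((cumHaz_strictMonoOn hpos hcont).le_iff_le hx hs.1).mp hs.2⟩

lemma le_hitTime_iff (hpos : ∀ t, 0 ≤ t → 0 < α t) (hcont : ContinuousOn α (Ici 0))
    (hAinf : Tendsto (cumHaz α) atTop atTop) {t z : ℝ} (ht : 0 < t) :
    t ≤ hitTime α z ↔ cumHaz α t ≤ z := by
  rcases le_total z 0 with hz | hz
  · have hhit : hitTime α z ≤ 0 := csInf_le ⟨0, fun _ hs ↦ hs.1⟩ ⟨le_rfl, by simpa using hz⟩
    have := cumHaz_pos hpos hcont ht
    constructor <;> intro h <;> linarith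
  · obtain ⟨x, hx, rfl⟩ := exists_cumHaz_eq hcont hAinf hz
    rw [hitTime_cumHaz hpos hcont hx, (cumHaz_strictMonoOn hpos hcont).le_iff_le ht.le hx]

lemma monotone_hitTime (hAinf : Tendsto (cumHaz α) atTop atTop) : Monotone (hitTime α) := by
  intro z z' h
  obtain ⟨b, hb⟩ := (hAinf.eventually_ge_atTop z').exists_forall_of_atTop
  exact csInf_le_csInf ⟨0, fun _ hs ↦ hs.1⟩ ⟨max b 0, le_max_right _ _, hb _ (le_max_left _ _)⟩
    fun s hs ↦ ⟨hs.1, h.trans hs.2⟩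

end HazardFunction

lemma ProbabilityTheory.IndepFun.measure_preimage_eq_lintegral {Ω β γ : Type*} [MeasurableSpace Ω]
    [MeasurableSpace β] [MeasurableSpace γ] {P : Measure Ω} [IsFiniteMeasure P] {X : Ω → β}
    {V : Ω → γ} (h : IndepFun X V P) (hX : Measurable X) (hV : Measurable V)
    {S : Set (β × γ)} (hS : MeasurableSet S) :
    P ((fun ω ↦ (X ω, V ω)) ⁻¹' S) = ∫⁻ x, P (V ⁻¹' (Prod.mk x ⁻¹' S)) ∂P.map X := by
  rw [← Measure.map_apply (hX.prodMk hV) hS,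
    (indepFun_iff_map_prod_eq_prod_map_map hX.aemeasurable hV.aemeasurable).mp h,
    Measure.prod_apply hS]
  exact lintegral_congr fun x ↦ Measure.map_apply hV (measurable_prodMk_left hS)

lemma lintegral_expMeasure_one {g : ℝ → ℝ≥0∞} (hg : Measurable g) :
    ∫⁻ z, g z ∂expMeasure 1 = ∫⁻ z in Ioi 0, ENNReal.ofReal (Real.exp (-z)) * g z := by
  change ∫⁻ z, g z ∂volume.withDensity (exponentialPDF 1) = _
  rw [lintegral_withDensity_eq_lintegral_mul _
      (show Measurable (exponentialPDF 1) from (measurable_exponentialPDFReal 1).ennreal_ofReal) hg,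
    ← setLIntegral_eq_of_support_subset (s := Ici 0), ← setLIntegral_congr Ioi_ae_eq_Ici]
  · refine setLIntegral_congr_fun measurableSet_Ioi fun z hz ↦ ?_
    simp [exponentialPDF_of_nonneg (le_of_lt hz)]
  · intro z hz
    by_contra hz'
    exact hz (by simp [exponentialPDF_of_neg (not_le.mp hz')])

section ExponentialClock

variable {Ω : Type*} [MeasurableSpace Ω] {P : Measure Ω} [IsProbabilityMeasure P] {Z : Ω → ℝ}
  {α : ℝ → ℝ}

lemma map_eq_expMeasure_one (hZ : Measurable Z)
    (htail : ∀ t : ℝ, 0 ≤ t → P {ω | t < Z ω} = ENNReal.ofReal (Real.exp (-t))) :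
    P.map Z = expMeasure 1 := by
  have := isProbabilityMeasure_expMeasure one_pos
  have := Measure.isProbabilityMeasure_map (μ := P) hZ.aemeasurable
  refine Measure.eq_of_cdf _ _ (StieltjesFunction.ext fun x ↦ ?_)
  rw [cdf_eq_real, cdf_expMeasure_eq one_pos, map_measureReal_apply hZ measurableSet_Iic,
    ← compl_Ioi, preimage_compl, probReal_compl_eq_one_sub (hZ measurableSet_Ioi), measureReal_def]
  split_ifs with hx
  · simp only [preimage, mem_Ioi]
    rw [htail x hx, one_mul, ENNReal.toReal_ofReal (Real.exp_pos _).le]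
  · have hsub : {ω | 0 < Z ω} ⊆ Z ⁻¹' Ioi x := fun ω hω ↦ lt_trans (not_le.mp hx) hω
    have hone : P (Z ⁻¹' Ioi x) = 1 :=
      le_antisymm prob_le_one (by simpa [htail 0 le_rfl] using measure_mono (μ := P) hsub)
    simp [hone]

lemma measure_le_eq_exp (hZ : Measurable Z)
    (htail : ∀ t : ℝ, 0 ≤ t → P {ω | t < Z ω} = ENNReal.ofReal (Real.exp (-t))) {a : ℝ}
    (ha : 0 ≤ a) : P {ω | a ≤ Z ω} = ENNReal.ofReal (Real.exp (-a)) := by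
  have : NullSingletonClass (expMeasure 1) := by unfold expMeasure gammaMeasure; infer_instance
  calc P {ω | a ≤ Z ω} = P.map Z (Ici a) := (Measure.map_apply hZ measurableSet_Ici).symm
    _ = P.map Z (Ioi a) := by rw [map_eq_expMeasure_one hZ htail, measure_congr Ioi_ae_eq_Ici]
    _ = _ := by rw [Measure.map_apply hZ measurableSet_Ioi]; exact htail a ha

lemma measure_le_hitTime (hpos : ∀ t, 0 ≤ t → 0 < α t) (hcont : ContinuousOn α (Ici 0))
    (hAinf : Tendsto (cumHaz α) atTop atTop) (hZ : Measurable Z)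
    (htail : ∀ t : ℝ, 0 ≤ t → P {ω | t < Z ω} = ENNReal.ofReal (Real.exp (-t))) {t : ℝ}
    (ht : 0 < t) : P {ω | t ≤ hitTime α (Z ω)} = ENNReal.ofReal (Real.exp (-cumHaz α t)) := by
  simp_rw [le_hitTime_iff hpos hcont hAinf ht]
  exact measure_le_eq_exp hZ htail (cumHaz_pos hpos hcont ht).le

lemma lintegral_map_hitTime (hpos : ∀ t, 0 ≤ t → 0 < α t) (hcont : ContinuousOn α (Ici 0))
    (hAinf : Tendsto (cumHaz α) atTop atTop) (hZ : Measurable Z)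
    (htail : ∀ t : ℝ, 0 ≤ t → P {ω | t < Z ω} = ENNReal.ofReal (Real.exp (-t)))
    {f : ℝ → ℝ≥0∞} (hf : Measurable f) :
    ∫⁻ x, f x ∂P.map (fun ω ↦ hitTime α (Z ω)) =
      ∫⁻ x in Ioi 0, ENNReal.ofReal (α x * Real.exp (-cumHaz α x)) * f x := by
  have hmeas := (monotone_hitTime hAinf).measurable
  calc ∫⁻ x, f x ∂P.map (hitTime α ∘ Z)
      = ∫⁻ z in Ioi 0, ENNReal.ofReal (Real.exp (-z)) * f (hitTime α z) := by
        rw [← Measure.map_map hmeas hZ, lintegral_map hf hmeas, map_eq_expMeasure_one hZ htail,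
          lintegral_expMeasure_one (g := fun z ↦ f (hitTime α z)) (hf.comp hmeas)]
    _ = ∫⁻ z in cumHaz α '' Ioi 0, ENNReal.ofReal (Real.exp (-z)) * f (hitTime α z) := by
        rw [cumHaz_image_Ioi hpos hcont hAinf]
    _ = ∫⁻ x in Ioi 0, ENNReal.ofReal |α x| *
          (ENNReal.ofReal (Real.exp (-cumHaz α x)) * f (hitTime α (cumHaz α x))) :=
        lintegral_image_eq_lintegral_abs_deriv_mul measurableSet_Ioi
          (fun x hx ↦ (cumHaz_hasDerivAt hcont hx).hasDerivWithinAt)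
          ((cumHaz_strictMonoOn hpos hcont).injOn.mono Ioi_subset_Ici_self) _
    _ = _ := setLIntegral_congr_fun measurableSet_Ioi fun x (hx : 0 < x) ↦ by
        rw [hitTime_cumHaz hpos hcont hx.le, abs_of_pos (hpos x hx.le),
          ENNReal.ofReal_mul (hpos x hx.le).le, mul_assoc]

end ExponentialClock

noncomputable def precedenceIntegral (αa αb αc : ℝ → ℝ) (ε : ℝ) : ℝ :=
  ∫ x in Ioi 0, αa x * Real.exp (-cumHaz αa x - cumHaz αb (x + ε) - cumHaz αc (x + ε))

section PrecedenceIntegral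

variable {αa αb αc : ℝ → ℝ} {ε : ℝ}

lemma precedenceIntegral_nonneg (hpos : ∀ t, 0 ≤ t → 0 < αa t) :
    0 ≤ precedenceIntegral αa αb αc ε :=
  setIntegral_nonneg measurableSet_Ioi fun x (hx : 0 < x) ↦
    mul_nonneg (hpos x hx.le).le (Real.exp_pos _).le

lemma ofReal_precedenceIntegral (hpos : ∀ t, 0 ≤ t → 0 < αa t)
    (hacont : ContinuousOn αa (Ici 0)) (hbcont : ContinuousOn αb (Ici 0))
    (hccont : ContinuousOn αc (Ici 0)) (hε : 0 ≤ ε)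
    (hfin : ∫⁻ x in Ioi 0, ENNReal.ofReal (αa x *
      Real.exp (-cumHaz αa x - cumHaz αb (x + ε) - cumHaz αc (x + ε))) ≠ ∞) :
    ENNReal.ofReal (precedenceIntegral αa αb αc ε) = ∫⁻ x in Ioi 0, ENNReal.ofReal (αa x *
      Real.exp (-cumHaz αa x - cumHaz αb (x + ε) - cumHaz αc (x + ε))) := by
  have hshift : ∀ {β : ℝ → ℝ}, ContinuousOn β (Ici 0) →
      ContinuousOn (fun x ↦ cumHaz β (x + ε)) (Ioi 0) := fun hβ ↦
    (cumHaz_continuousOn hβ).comp (continuousOn_id.add continuousOn_const)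
      fun x (hx : 0 < x) ↦ mem_Ici.mpr (by linarith)
  have hcont := (hacont.mono Ioi_subset_Ici_self).mul
    ((((cumHaz_continuousOn hacont).mono Ioi_subset_Ici_self).neg.sub (hshift hbcont)).sub
      (hshift hccont)).rexp
  have hnonneg : ∀ᵐ x ∂volume.restrict (Ioi 0), 0 ≤ αa x *
      Real.exp (-cumHaz αa x - cumHaz αb (x + ε) - cumHaz αc (x + ε)) :=
    (ae_restrict_iff' measurableSet_Ioi).mpr <| Eventually.of_forall fun x (hx : 0 < x) ↦
      mul_nonneg (hpos x hx.le).le (Real.exp_pos _).le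
  rw [precedenceIntegral, integral_eq_lintegral_of_nonneg_ae hnonneg
    (hcont.aestronglyMeasurable measurableSet_Ioi), ENNReal.ofReal_toReal hfin]

end PrecedenceIntegral

theorem measure_hitTime_add_le_both_eq_precedenceIntegral {Ω ι : Type*} [MeasurableSpace Ω]
    {P : Measure Ω} [IsProbabilityMeasure P] {Z : ι → Ω → ℝ} {α : ι → ℝ → ℝ}
    (hZmeas : ∀ i, Measurable (Z i)) (hZindep : iIndepFun Z P)
    (hZexp : ∀ i, ∀ t : ℝ, 0 ≤ t → P {ω | t < Z i ω} = ENNReal.ofReal (Real.exp (-t)))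
    (hαpos : ∀ i t, 0 ≤ t → 0 < α i t) (hαcont : ∀ i, ContinuousOn (α i) (Ici 0))
    (hAinf : ∀ i, Tendsto (cumHaz (α i)) atTop atTop) {a b c : ι} (hab : a ≠ b) (hac : a ≠ c)
    (hbc : b ≠ c) {ε : ℝ} (hε : 0 < ε) :
    P {ω | hitTime (α a) (Z a ω) + ε ≤ hitTime (α b) (Z b ω) ∧
        hitTime (α a) (Z a ω) + ε ≤ hitTime (α c) (Z c ω)} =
      ENNReal.ofReal (precedenceIntegral (α a) (α b) (α c) ε) := by
  set η : ι → Ω → ℝ := fun i ω ↦ hitTime (α i) (Z i ω)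
  have hmeas : ∀ i, Measurable (hitTime (α i)) := fun i ↦ (monotone_hitTime (hAinf i)).measurable
  have hηmeas : ∀ i, Measurable (η i) := fun i ↦ (hmeas i).comp (hZmeas i)
  have hηindep : iIndepFun η P := hZindep.comp _ hmeas
  have htail_meas : ∀ i, Measurable fun x ↦ P {ω | x + ε ≤ η i ω} := fun i ↦
    Antitone.measurable fun x y hxy ↦ measure_mono fun ω (hω : y + ε ≤ η i ω) ↦
      show x + ε ≤ η i ω by linarith
  have hlint : P {ω | η a ω + ε ≤ η b ω ∧ η a ω + ε ≤ η c ω} = ∫⁻ x in Ioi 0,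
      ENNReal.ofReal (α a x *
        Real.exp (-cumHaz (α a) x - cumHaz (α b) (x + ε) - cumHaz (α c) (x + ε))) := calc
    _ = ∫⁻ x, P ({ω | x + ε ≤ η b ω} ∩ {ω | x + ε ≤ η c ω}) ∂P.map (η a) :=
      (hηindep.indepFun_prodMk hηmeas b c a hab.symm hac.symm).symm.measure_preimage_eq_lintegral
        (hηmeas a) ((hηmeas b).prodMk (hηmeas c))
        (S := {q | q.1 + ε ≤ q.2.1 ∧ q.1 + ε ≤ q.2.2}) (by measurability)
    _ = ∫⁻ x, P {ω | x + ε ≤ η b ω} * P {ω | x + ε ≤ η c ω} ∂P.map (η a) :=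
      lintegral_congr fun x ↦ (hηindep.indepFun hbc).measure_inter_preimage_eq_mul
        (Ici (x + ε)) (Ici (x + ε)) measurableSet_Ici measurableSet_Ici
    _ = ∫⁻ x in Ioi 0, ENNReal.ofReal (α a x * Real.exp (-cumHaz (α a) x)) *
          (P {ω | x + ε ≤ η b ω} * P {ω | x + ε ≤ η c ω}) :=
      lintegral_map_hitTime (hαpos a) (hαcont a) (hAinf a) (hZmeas a) (hZexp a)
        ((htail_meas b).mul (htail_meas c))
    _ = _ := setLIntegral_congr_fun measurableSet_Ioi fun x (hx : 0 < x) ↦ by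
      have hxε : 0 < x + ε := by linarith
      rw [measure_le_hitTime (hαpos b) (hαcont b) (hAinf b) (hZmeas b) (hZexp b) hxε,
        measure_le_hitTime (hαpos c) (hαcont c) (hAinf c) (hZmeas c) (hZexp c) hxε,
        ← ENNReal.ofReal_mul (Real.exp_pos _).le,
        ← ENNReal.ofReal_mul (mul_nonneg (hαpos a x hx.le).le (Real.exp_pos _).le),
        mul_assoc, ← Real.exp_add, ← Real.exp_add]
      ring_nf
  rw [ofReal_precedenceIntegral (hαpos a) (hαcont a) (hαcont b) (hαcont c) hε.le
    (hlint ▸ measure_ne_top _ _)]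
  exact hlint

lemma add_le_and_add_le_of_le_abs_min_sub_min {a b c ε : ℝ} (hε : 0 < ε)
    (h : ε ≤ |min a b - min a c|) : (b + ε ≤ c ∧ b + ε ≤ a) ∨ (c + ε ≤ b ∧ c + ε ≤ a) := by
  rcases le_abs.mp h with h | h
  · right
    rcases min_cases a b with hb | hb <;> rcases min_cases a c with hc | hc <;>
      constructor <;> linarith
  · left
    rcases min_cases a b with hb | hb <;> rcases min_cases a c with hc | hc <;>
      constructor <;> linarith

lemma exists_ne_and_sInf_eq {ι : Type*} [Finite ι] [Nontrivial ι] (f : ι → ι → ℝ) :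
    ∃ i j, i ≠ j ∧ sInf {r | ∃ i j, i ≠ j ∧ r = f i j} = f i j := by
  obtain ⟨i, j, hij⟩ := exists_pair_ne ι
  set S := {r | ∃ i j, i ≠ j ∧ r = f i j}
  have hfin : S.Finite :=
    (finite_range fun p : ι × ι ↦ f p.1 p.2).subset <| by
      rintro _ ⟨i, j, -, rfl⟩
      exact ⟨(i, j), rfl⟩
  exact Nonempty.csInf_mem (s := S) ⟨f i j, i, j, hij, rfl⟩ hfin

lemma one_sub_le_measure_of_compl_subset {Ω : Type*} [MeasurableSpace Ω] {P : Measure Ω}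
    [IsProbabilityMeasure P] {E B : Set Ω} (h : Eᶜ ⊆ B) : 1 - P B ≤ P E := by
  rw [tsub_le_iff_right]
  calc 1 = P univ := measure_univ.symm
    _ ≤ P E + P Eᶜ := measure_univ_le_add_compl E
    _ ≤ P E + P B := add_le_add_right (measure_mono h) _

/-- (Pairwise lower bound on the market failure probability.) For `ε > 0`,
`P(|τ_i − τ_j| < ε for some i ≠ j) ≥ 1 − min_{i ≠ j} [∫_0^∞ α_i(x) e^{−A_i(x) − A_j(x+ε) − A_0(x+ε)} dx
  + ∫_0^∞ α_j(x) e^{−A_j(x) − A_i(x+ε) − A_0(x+ε)} dx]`,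
the minimum being over all pairs of distinct bank indices. -/
theorem market_failure_probability_pairwise_lower_bound
    {Ω : Type*} [MeasurableSpace Ω] (P : Measure Ω) [IsProbabilityMeasure P]
    (K : ℕ) (hK : 2 ≤ K) (Z : Fin (K + 1) → Ω → ℝ) (α : Fin (K + 1) → ℝ → ℝ)
    (hZmeas : ∀ i, Measurable (Z i))
    (hZindep : iIndepFun Z P)
    (hZexp : ∀ i, ∀ t : ℝ, 0 ≤ t → P {ω | t < Z i ω} = ENNReal.ofReal (Real.exp (-t)))
    (hαpos : ∀ i t, 0 ≤ t → 0 < α i t)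
    (hαcont : ∀ i, ContinuousOn (α i) (Set.Ici 0))
    (hAinf : ∀ i, Filter.Tendsto (cumHaz (α i)) Filter.atTop Filter.atTop)
    (ε : ℝ) (hε : 0 < ε) :
    P {ω | ∃ i j : Fin K, i ≠ j ∧
        |min (hitTime (α 0) (Z 0 ω)) (hitTime (α i.succ) (Z i.succ ω))
          - min (hitTime (α 0) (Z 0 ω)) (hitTime (α j.succ) (Z j.succ ω))| < ε}
      ≥ 1 - ENNReal.ofReal (sInf {r : ℝ | ∃ i j : Fin K, i ≠ j ∧
          r = (∫ x in Set.Ioi (0 : ℝ), α i.succ x *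
                Real.exp (-cumHaz (α i.succ) x - cumHaz (α j.succ) (x + ε)
                  - cumHaz (α 0) (x + ε)))
            + ∫ x in Set.Ioi (0 : ℝ), α j.succ x *
                Real.exp (-cumHaz (α j.succ) x - cumHaz (α i.succ) (x + ε)
                  - cumHaz (α 0) (x + ε))}) := by
  have : Nontrivial (Fin K) := Fin.nontrivial_iff_two_le.mpr hK
  set I : Fin K → Fin K → ℝ := fun i j ↦ precedenceIntegral (α i.succ) (α j.succ) (α 0) ε
  set B : Fin K → Fin K → Set Ω := fun i j ↦ {ω |
    hitTime (α i.succ) (Z i.succ ω) + ε ≤ hitTime (α j.succ) (Z j.succ ω) ∧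
      hitTime (α i.succ) (Z i.succ ω) + ε ≤ hitTime (α 0) (Z 0 ω)}
  have hB : ∀ i j, i ≠ j → P (B i j) = ENNReal.ofReal (I i j) := fun i j hij ↦
    measure_hitTime_add_le_both_eq_precedenceIntegral hZmeas hZindep hZexp hαpos hαcont hAinf
      (Fin.succ_injective _ |>.ne hij) (Fin.succ_ne_zero i) (Fin.succ_ne_zero j) hε
  obtain ⟨i, j, hij, hmin⟩ := exists_ne_and_sInf_eq fun i j ↦ I i j + I j i
  refine (tsub_le_tsub_left ?_ 1).trans (one_sub_le_measure_of_compl_subset (B := B i j ∪ B j i)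
    fun ω hω ↦ add_le_and_add_le_of_le_abs_min_sub_min hε (not_lt.mp fun h ↦ hω ⟨i, j, hij, h⟩))
  calc P (B i j ∪ B j i) ≤ P (B i j) + P (B j i) := measure_union_le _ _
    _ = ENNReal.ofReal (I i j + I j i) := by
      rw [hB i j hij, hB j i hij.symm, ENNReal.ofReal_add (precedenceIntegral_nonneg (hαpos _))
        (precedenceIntegral_nonneg (hαpos _))]
    _ = _ := congrArg ENNReal.ofReal hmin.symm
end
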